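/- Let H be a Hopf algebra over a field k and let ξ = Σᵢ aᵢ ⊗ bᵢ be an element of ker ε ⊗ ker ε ⊆ H ⊗ H. Then the element g(ξ) := Σᵢ (aᵢ)₍₁₎ ⊗ S((aᵢ)₍₂₎) S((bᵢ)₍₁₎) ⊗ (bᵢ)₍₂₎ of H ⊗ H ⊗ H lies in Ω²H, i.e. (m ⊗ id)(g(ξ)) = 0 and (id ⊗ m)(g(ξ)) = 0. -/
import Mathlib


open TensorProduct

noncomputable section

variable {k H : Type*} [Field k] [Ring H] [HopfAlgebra k H]

/-- The kernel of the counit `ε : H → k`. -/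
noncomputable def kerCounit : Submodule k H :=
  LinearMap.ker (Coalgebra.counit (R := k) (A := H))

/-- The wedge-type rearrangement `(a ⊗ b) ⊗ (c ⊗ d) ↦ a ⊗ bc ⊗ d`. -/
noncomputable def wedge :
    (H ⊗[k] H) ⊗[k] (H ⊗[k] H) →ₗ[k] H ⊗[k] (H ⊗[k] H) :=
  LinearMap.lTensor H
      ((LinearMap.mul' k H).rTensor H ∘ₗ (TensorProduct.assoc k H H H).symm.toLinearMap)
    ∘ₗ (TensorProduct.assoc k H H (H ⊗[k] H)).toLinearMap

/-- The metric map `g : a ⊗ b ↦ Σ a₍₁₎ ⊗ S(a₍₂₎) S(b₍₁₎) ⊗ b₍₂₎`. -/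
noncomputable def metricMap : H ⊗[k] H →ₗ[k] H ⊗[k] (H ⊗[k] H) :=
  wedge
    ∘ₗ TensorProduct.map
        ((HopfAlgebra.antipode (R := k) (A := H)).lTensor H ∘ₗ Coalgebra.comul)
        ((HopfAlgebra.antipode (R := k) (A := H)).rTensor H ∘ₗ Coalgebra.comul)

/-- `(m ⊗ id)` on `H ⊗ H ⊗ H`. -/
noncomputable def mulFirstTwo : H ⊗[k] (H ⊗[k] H) →ₗ[k] H ⊗[k] H :=
  (LinearMap.mul' k H).rTensor H ∘ₗ (TensorProduct.assoc k H H H).symm.toLinearMap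

/-- `(id ⊗ m)` on `H ⊗ H ⊗ H`. -/
noncomputable def mulLastTwo : H ⊗[k] (H ⊗[k] H) →ₗ[k] H ⊗[k] H :=
  (LinearMap.mul' k H).lTensor H

lemma lemA : (mulFirstTwo (k := k) (H := H)) ∘ₗ wedge
    = mulFirstTwo ∘ₗ (LinearMap.mul' k H).rTensor (H ⊗[k] H) := by
  ext a b c d
  simp [mulFirstTwo, wedge, mul_assoc]

lemma lemB : (mulLastTwo (k := k) (H := H)) ∘ₗ wedge
    = mulLastTwo ∘ₗ (TensorProduct.assoc k H H H).toLinearMap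
        ∘ₗ (LinearMap.mul' k H).lTensor (H ⊗[k] H) := by
  ext a b c d
  simp [mulLastTwo, wedge, mul_assoc]

/-- for every `ξ ∈ ker ε ⊗ ker ε ⊆ H ⊗ H`, the element
`g(ξ) = Σᵢ (aᵢ)₍₁₎ ⊗ S((aᵢ)₍₂₎) S((bᵢ)₍₁₎) ⊗ (bᵢ)₍₂₎` lies in `Ω²H`, i.e.
`(m ⊗ id)(g(ξ)) = 0` and `(id ⊗ m)(g(ξ)) = 0`. -/
theorem statement10 (ξ : H ⊗[k] H)
    (hξ : ξ ∈ LinearMap.range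
      (TensorProduct.map (kerCounit (k := k) (H := H)).subtype
        (kerCounit (k := k) (H := H)).subtype)) :
    mulFirstTwo (metricMap ξ) = 0 ∧ mulLastTwo (metricMap ξ) = 0 := by
  obtain ⟨x, rfl⟩ := hξ
  set ι := (kerCounit (k := k) (H := H)).subtype with hιdef
  have hι : Coalgebra.counit (R := k) (A := H) ∘ₗ ι = 0 := by
    ext ⟨a, ha⟩; exact ha
  have hS := HopfAlgebra.antipode (R := k) (A := H)
  have h1 : LinearMap.mul' k H ∘ₗ
      ((HopfAlgebra.antipode (R := k) (A := H)).lTensor H ∘ₗ Coalgebra.comul) ∘ₗ ι = 0 := by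
    rw [← LinearMap.comp_assoc, HopfAlgebra.mul_antipode_lTensor_comul,
      LinearMap.comp_assoc, hι, LinearMap.comp_zero]
  have h2 : LinearMap.mul' k H ∘ₗ
      ((HopfAlgebra.antipode (R := k) (A := H)).rTensor H ∘ₗ Coalgebra.comul) ∘ₗ ι = 0 := by
    rw [← LinearMap.comp_assoc, HopfAlgebra.mul_antipode_rTensor_comul,
      LinearMap.comp_assoc, hι, LinearMap.comp_zero]
  constructor
  · have key : (mulFirstTwo (k := k) (H := H)) ∘ₗ metricMap ∘ₗ TensorProduct.map ι ι = 0 := by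
      rw [metricMap]
      simp only [← LinearMap.comp_assoc]
      rw [lemA]
      simp only [LinearMap.comp_assoc]
      rw [← TensorProduct.map_comp, LinearMap.rTensor, ← TensorProduct.map_comp,
        LinearMap.id_comp, h1, TensorProduct.map_zero_left, LinearMap.comp_zero]
    simpa using LinearMap.congr_fun key x
  · have key : (mulLastTwo (k := k) (H := H)) ∘ₗ metricMap ∘ₗ TensorProduct.map ι ι = 0 := by
      rw [metricMap]
      simp only [← LinearMap.comp_assoc]
      rw [lemB]
      simp only [LinearMap.comp_assoc]
      rw [← TensorProduct.map_comp, LinearMap.lTensor, ← TensorProduct.map_comp,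
        LinearMap.id_comp, h2, TensorProduct.map_zero_right, LinearMap.comp_zero, LinearMap.comp_zero]
    simpa using LinearMap.congr_fun key x
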